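/- arXiv:2209.07710 — 2 statements merged into one kernel-verified Lean document; each statement's English description precedes it below -/
import Mathlib

section
/- Let α, λ be real with λ ≥ 0, and set ω⁺ = -(α + √(α² + 4λ²))/2, ω⁻ = -(α - √(α² + 4λ²))/2, ω = ω⁺ - ω⁻. Then for every real t, |(ω⁺ e^{iω⁻ t} - ω⁻ e^{iω⁺ t})/ω|² = (α² + 4λ² cos²(ωt/2))/ω² ≤ 1. -/
/-! `ω⁺` and `ω⁻` are the roots of `z² + αz - λ²`, so `ω⁺ + ω⁻ = -α`, `ω⁺ω⁻ = -λ²` and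
`ω² = α² + 4λ²`. The law of cosines gives `|p e^{ix} - q e^{iy}|² = (p + q)² - 4pq cos²((x - y)/2)`,
which here is `α² + 4λ² cos²(ωt/2) ≤ α² + 4λ² = ω²`. -/

open Complex in
theorem norm_ofReal_mul_exp_sub_ofReal_mul_exp_sq (p q x y : ℝ) :
    ‖(p : ℂ) * exp (I * x) - q * exp (I * y)‖ ^ 2 = p ^ 2 + q ^ 2 - 2 * p * q * Real.cos (x - y) := by
  have hre : ((p : ℂ) * exp (I * x) - q * exp (I * y)) =
      ((p * Real.cos x - q * Real.cos y : ℝ) : ℂ) + ((p * Real.sin x - q * Real.sin y : ℝ) : ℂ) * I := by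
    rw [mul_comm I, mul_comm I, exp_mul_I, exp_mul_I, ← ofReal_cos, ← ofReal_cos, ← ofReal_sin,
      ← ofReal_sin]
    push_cast
    ring
  rw [hre, Complex.sq_norm, normSq_add_mul_I, Real.cos_sub]
  linear_combination p ^ 2 * Real.sin_sq_add_cos_sq x + q ^ 2 * Real.sin_sq_add_cos_sq y

open Complex in
theorem norm_ofReal_mul_exp_sub_ofReal_mul_exp_sq_eq_half_angle (p q x y : ℝ) :
    ‖(p : ℂ) * exp (I * x) - q * exp (I * y)‖ ^ 2 =
      (p + q) ^ 2 - 4 * (p * q) * Real.cos ((x - y) / 2) ^ 2 := by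
  have hhalf := Real.cos_sq ((x - y) / 2)
  rw [show 2 * ((x - y) / 2) = x - y by ring] at hhalf
  rw [norm_ofReal_mul_exp_sub_ofReal_mul_exp_sq, hhalf]
  ring

theorem stmt1_general (α lam : ℝ) :
    let ωp : ℝ := -(α + Real.sqrt (α ^ 2 + 4 * lam ^ 2)) / 2
    let ωm : ℝ := -(α - Real.sqrt (α ^ 2 + 4 * lam ^ 2)) / 2
    let ω : ℝ := ωp - ωm
    ∀ t : ℝ,
      ‖((ωp : ℂ) * Complex.exp (Complex.I * ωm * t)
          - (ωm : ℂ) * Complex.exp (Complex.I * ωp * t)) / (ω : ℂ)‖ ^ 2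
        = (α ^ 2 + 4 * lam ^ 2 * Real.cos (ω * t / 2) ^ 2) / ω ^ 2 ∧
      ‖((ωp : ℂ) * Complex.exp (Complex.I * ωm * t)
          - (ωm : ℂ) * Complex.exp (Complex.I * ωp * t)) / (ω : ℂ)‖ ^ 2 ≤ 1 := by
  intro ωp ωm ω t
  have hsqrt : Real.sqrt (α ^ 2 + 4 * lam ^ 2) ^ 2 = α ^ 2 + 4 * lam ^ 2 :=
    Real.sq_sqrt (by positivity)
  have hsum : ωp + ωm = -α := by ring
  have hprod : ωp * ωm = -lam ^ 2 := by linear_combination (-1 / 4 : ℝ) * hsqrt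
  have hω : ω ^ 2 = α ^ 2 + 4 * lam ^ 2 := by linear_combination hsqrt
  have hnorm : ‖((ωp : ℂ) * Complex.exp (Complex.I * ωm * t)
      - (ωm : ℂ) * Complex.exp (Complex.I * ωp * t)) / (ω : ℂ)‖ ^ 2
      = (α ^ 2 + 4 * lam ^ 2 * Real.cos (ω * t / 2) ^ 2) / ω ^ 2 := by
    simp only [mul_assoc, ← Complex.ofReal_mul]
    rw [norm_div, div_pow, norm_ofReal_mul_exp_sub_ofReal_mul_exp_sq_eq_half_angle, hsum, hprod,
      Complex.norm_real, Real.norm_eq_abs, sq_abs,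
      show (ωm * t - ωp * t) / 2 = -(ω * t / 2) by ring, Real.cos_neg]
    ring
  refine ⟨hnorm, hnorm ▸ div_le_one_of_le₀ ?_ (sq_nonneg ω)⟩
  rw [hω]
  nlinarith [Real.cos_sq_le_one (ω * t / 2), sq_nonneg lam]

theorem stmt1 (α lam : ℝ) (hlam : 0 ≤ lam) (h : 0 < α ^ 2 + 4 * lam ^ 2) :
    let ωp : ℝ := -(α + Real.sqrt (α ^ 2 + 4 * lam ^ 2)) / 2
    let ωm : ℝ := -(α - Real.sqrt (α ^ 2 + 4 * lam ^ 2)) / 2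
    let ω : ℝ := ωp - ωm
    ∀ t : ℝ,
      ‖((ωp : ℂ) * Complex.exp (Complex.I * ωm * t)
          - (ωm : ℂ) * Complex.exp (Complex.I * ωp * t)) / (ω : ℂ)‖ ^ 2
        = (α ^ 2 + 4 * lam ^ 2 * Real.cos (ω * t / 2) ^ 2) / ω ^ 2 ∧
      ‖((ωp : ℂ) * Complex.exp (Complex.I * ωm * t)
          - (ωm : ℂ) * Complex.exp (Complex.I * ωp * t)) / (ω : ℂ)‖ ^ 2 ≤ 1 :=
  stmt1_general α lam
end

section
/- Let u, v be complex grid functions on a 2D grid with zero boundary values, with discrete gradient ∇ₕw = (δₓ⁺w, δ_y⁺w), discrete H¹ seminorm |w|_{h,1}² = ‖δₓ⁺w‖²_{l²} + ‖δ_y⁺w‖²_{l²}, and discrete L∞ norm ‖w‖_{l∞} = max over grid points. Then ‖∇ₕ(uv)‖_{l²} ≤ √2 (‖v‖_{l∞} |u|_{h,1} + ‖u‖_{l∞} |v|_{h,1}); in particular ‖∇ₕ(uv)‖_{l²} ≤ 2(‖v‖_{l∞} |u|_{h,1} + ‖u‖_{l∞} |v|_{h,1}). -/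
/-- Discrete H¹ seminorm (squared under the square root) of a 2D grid function:
`|w|_{h,1} = ( h₁h₂ ( Σ_{j=0}^{N-1} Σ_{k=1}^{N-1} |δₓ⁺w_{jk}|² + Σ_{j=1}^{N-1} Σ_{k=0}^{N-1} |δ_y⁺w_{jk}|² ) )^{1/2}`. -/
noncomputable def discreteH1Semi (N : ℕ) (h₁ h₂ : ℝ) (w : ℕ → ℕ → ℂ) : ℝ :=
  Real.sqrt (h₁ * h₂ *
    ((∑ j ∈ Finset.range N, ∑ k ∈ Finset.Ico 1 N,
        ‖(w (j + 1) k - w j k) / (h₁ : ℂ)‖ ^ 2) +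
     ∑ j ∈ Finset.Ico 1 N, ∑ k ∈ Finset.range N,
        ‖(w j (k + 1) - w j k) / (h₂ : ℂ)‖ ^ 2))

/-!
A difference quotient of a product splits as `δ(ab) = δa · b' + a · δb`, where `b'` is the
shifted value of `b`. Bounding `b'` and `a` in sup norm and using `(x + y)² ≤ 2(x² + y²)` gives,
term by term, `|δ(uv)|² ≤ 2 Cv² |δu|² + 2 Cu² |δv|²`; summing over the grid and taking square
roots yields the estimate, and `√2 ≤ 2` the weaker one.
-/

open Finset

section ProductRule

variable {𝕜 : Type*} [NormedField 𝕜]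

theorem norm_div_mul_sub_mul_le {a a' b b' : 𝕜} (c : 𝕜) {Cu Cv : ℝ}
    (ha : ‖a‖ ≤ Cu) (hb' : ‖b'‖ ≤ Cv) :
    ‖(a' * b' - a * b) / c‖ ≤ Cv * ‖(a' - a) / c‖ + Cu * ‖(b' - b) / c‖ := by
  have hsplit : (a' * b' - a * b) / c = (a' - a) / c * b' + a * ((b' - b) / c) := by
    rcases eq_or_ne c 0 with rfl | hc
    · simp
    · field_simp
      ring
  rw [hsplit]
  calc ‖(a' - a) / c * b' + a * ((b' - b) / c)‖
      ≤ ‖(a' - a) / c‖ * ‖b'‖ + ‖a‖ * ‖(b' - b) / c‖ := by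
        simpa only [norm_mul] using norm_add_le ((a' - a) / c * b') (a * ((b' - b) / c))
    _ ≤ Cv * ‖(a' - a) / c‖ + Cu * ‖(b' - b) / c‖ := by
        rw [mul_comm Cv]
        gcongr

theorem sq_norm_div_mul_sub_mul_le {a a' b b' : 𝕜} (c : 𝕜) {Cu Cv : ℝ}
    (ha : ‖a‖ ≤ Cu) (hb' : ‖b'‖ ≤ Cv) :
    ‖(a' * b' - a * b) / c‖ ^ 2 ≤
      2 * (Cv ^ 2 * ‖(a' - a) / c‖ ^ 2 + Cu ^ 2 * ‖(b' - b) / c‖ ^ 2) :=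
  calc ‖(a' * b' - a * b) / c‖ ^ 2
      ≤ (Cv * ‖(a' - a) / c‖ + Cu * ‖(b' - b) / c‖) ^ 2 := by
        gcongr
        exact norm_div_mul_sub_mul_le c ha hb'
    _ ≤ 2 * (Cv ^ 2 * ‖(a' - a) / c‖ ^ 2 + Cu ^ 2 * ‖(b' - b) / c‖ ^ 2) := by
        simpa only [mul_pow] using
          add_sq_le (a := Cv * ‖(a' - a) / c‖) (b := Cu * ‖(b' - b) / c‖)

theorem sum_sum_sq_norm_div_mul_sub_mul_le {ι κ : Type*} (s : Finset ι) (t : Finset κ)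
    (c : 𝕜) {a a' b b' : ι → κ → 𝕜} {Cu Cv : ℝ}
    (ha : ∀ i ∈ s, ∀ k ∈ t, ‖a i k‖ ≤ Cu) (hb' : ∀ i ∈ s, ∀ k ∈ t, ‖b' i k‖ ≤ Cv) :
    ∑ i ∈ s, ∑ k ∈ t, ‖(a' i k * b' i k - a i k * b i k) / c‖ ^ 2 ≤
      2 * (Cv ^ 2 * ∑ i ∈ s, ∑ k ∈ t, ‖(a' i k - a i k) / c‖ ^ 2 +
        Cu ^ 2 * ∑ i ∈ s, ∑ k ∈ t, ‖(b' i k - b i k) / c‖ ^ 2) := by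
  simp only [mul_sum, ← sum_add_distrib]
  exact sum_le_sum fun i hi => sum_le_sum fun k hk =>
    sq_norm_div_mul_sub_mul_le c (ha i hi k hk) (hb' i hi k hk)

end ProductRule

theorem Real.sqrt_le_sqrt_two_mul_add {A B D Cu Cv : ℝ} (hB : 0 ≤ B) (hD : 0 ≤ D)
    (hCu : 0 ≤ Cu) (hCv : 0 ≤ Cv) (hA : A ≤ 2 * (Cv ^ 2 * B + Cu ^ 2 * D)) :
    √A ≤ √2 * (Cv * √B + Cu * √D) := by
  rw [Real.sqrt_le_iff]
  refine ⟨by positivity, ?_⟩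
  have hcross : 0 ≤ Cv * √B * (Cu * √D) := by positivity
  calc A ≤ 2 * (Cv ^ 2 * B + Cu ^ 2 * D) := hA
    _ ≤ (√2 * (Cv * √B + Cu * √D)) ^ 2 := by
      rw [mul_pow, Real.sq_sqrt zero_le_two, add_sq, mul_pow, mul_pow,
        Real.sq_sqrt hB, Real.sq_sqrt hD]
      nlinarith

section Grid

variable (N : ℕ) (h₁ h₂ : ℝ)

noncomputable def gradSqSum (w : ℕ → ℕ → ℂ) : ℝ :=
  (∑ j ∈ range N, ∑ k ∈ Ico 1 N, ‖(w (j + 1) k - w j k) / (h₁ : ℂ)‖ ^ 2) +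
    ∑ j ∈ Ico 1 N, ∑ k ∈ range N, ‖(w j (k + 1) - w j k) / (h₂ : ℂ)‖ ^ 2

theorem discreteH1Semi_eq_sqrt (w : ℕ → ℕ → ℂ) :
    discreteH1Semi N h₁ h₂ w = √(h₁ * h₂ * gradSqSum N h₁ h₂ w) := rfl

theorem gradSqSum_nonneg (w : ℕ → ℕ → ℂ) : 0 ≤ gradSqSum N h₁ h₂ w := by
  unfold gradSqSum
  positivity

theorem gradSqSum_mul_le {u v : ℕ → ℕ → ℂ} {Cu Cv : ℝ}
    (hCu : ∀ j k : ℕ, j ≤ N → k ≤ N → ‖u j k‖ ≤ Cu)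
    (hCv : ∀ j k : ℕ, j ≤ N → k ≤ N → ‖v j k‖ ≤ Cv) :
    gradSqSum N h₁ h₂ (fun j k => u j k * v j k) ≤
      2 * (Cv ^ 2 * gradSqSum N h₁ h₂ u + Cu ^ 2 * gradSqSum N h₁ h₂ v) := by
  have hx := sum_sum_sq_norm_div_mul_sub_mul_le (range N) (Ico 1 N) (h₁ : ℂ)
    (a := u) (a' := fun j k => u (j + 1) k) (b := v) (b' := fun j k => v (j + 1) k)
    (fun j hj k hk => hCu j k (mem_range.1 hj).le (mem_Ico.1 hk).2.le)
    (fun j hj k hk => hCv (j + 1) k (mem_range.1 hj) (mem_Ico.1 hk).2.le)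
  have hy := sum_sum_sq_norm_div_mul_sub_mul_le (Ico 1 N) (range N) (h₂ : ℂ)
    (a := u) (a' := fun j k => u j (k + 1)) (b := v) (b' := fun j k => v j (k + 1))
    (fun j hj k hk => hCu j k (mem_Ico.1 hj).2.le (mem_range.1 hk).le)
    (fun j hj k hk => hCv j (k + 1) (mem_Ico.1 hj).2.le (mem_range.1 hk))
  unfold gradSqSum
  linarith

end Grid

theorem stmt10_general (N : ℕ) (h₁ h₂ : ℝ) (hh₁ : 0 < h₁) (hh₂ : 0 < h₂)
    (u v : ℕ → ℕ → ℂ)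
    (Cu Cv : ℝ)
    (hCu : ∀ j k : ℕ, j ≤ N → k ≤ N → ‖u j k‖ ≤ Cu)
    (hCv : ∀ j k : ℕ, j ≤ N → k ≤ N → ‖v j k‖ ≤ Cv) :
    discreteH1Semi N h₁ h₂ (fun j k => u j k * v j k)
        ≤ Real.sqrt 2 * (Cv * discreteH1Semi N h₁ h₂ u + Cu * discreteH1Semi N h₁ h₂ v) ∧
    discreteH1Semi N h₁ h₂ (fun j k => u j k * v j k)
        ≤ 2 * (Cv * discreteH1Semi N h₁ h₂ u + Cu * discreteH1Semi N h₁ h₂ v) := by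
  have hCu0 : 0 ≤ Cu := (norm_nonneg _).trans (hCu 0 0 N.zero_le N.zero_le)
  have hCv0 : 0 ≤ Cv := (norm_nonneg _).trans (hCv 0 0 N.zero_le N.zero_le)
  have hh : 0 ≤ h₁ * h₂ := by positivity
  have hgrad := mul_le_mul_of_nonneg_left (gradSqSum_mul_le N h₁ h₂ hCu hCv) hh
  have hsqrt2 : √2 ≤ 2 := Real.sqrt_le_iff.2 ⟨zero_le_two, by norm_num⟩
  simp only [discreteH1Semi_eq_sqrt]
  have key := Real.sqrt_le_sqrt_two_mul_add
    (mul_nonneg hh (gradSqSum_nonneg N h₁ h₂ u)) (mul_nonneg hh (gradSqSum_nonneg N h₁ h₂ v))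
    hCu0 hCv0 (A := h₁ * h₂ * gradSqSum N h₁ h₂ (fun j k => u j k * v j k))
    (by linarith)
  exact ⟨key, key.trans (by gcongr)⟩

theorem stmt10 (N : ℕ) (hN : 2 ≤ N) (h₁ h₂ : ℝ) (hh₁ : 0 < h₁) (hh₂ : 0 < h₂)
    (u v : ℕ → ℕ → ℂ)
    (hbu : ∀ j k : ℕ, j ≤ N → k ≤ N → (j = 0 ∨ j = N ∨ k = 0 ∨ k = N) → u j k = 0)
    (hbv : ∀ j k : ℕ, j ≤ N → k ≤ N → (j = 0 ∨ j = N ∨ k = 0 ∨ k = N) → v j k = 0)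
    (Cu Cv : ℝ)
    (hCu : ∀ j k : ℕ, j ≤ N → k ≤ N → ‖u j k‖ ≤ Cu)
    (hCv : ∀ j k : ℕ, j ≤ N → k ≤ N → ‖v j k‖ ≤ Cv) :
    discreteH1Semi N h₁ h₂ (fun j k => u j k * v j k)
        ≤ Real.sqrt 2 * (Cv * discreteH1Semi N h₁ h₂ u + Cu * discreteH1Semi N h₁ h₂ v) ∧
    discreteH1Semi N h₁ h₂ (fun j k => u j k * v j k)
        ≤ 2 * (Cv * discreteH1Semi N h₁ h₂ u + Cu * discreteH1Semi N h₁ h₂ v) :=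
  stmt10_general N h₁ h₂ hh₁ hh₂ u v Cu Cv hCu hCv
end
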